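/- Let U ⊆ V, let H = (U, E(U)) be the induced subgraph of G on U (with the same edge weights), and let f : V → ℝ be a nonzero function with f(v) = 0 for all v ∉ U and with Σ_{v ∈ U} w_H(v)·f(v)² > 0. Let (L, R) be a partition of V∖U, and define the uncutness of an induced cut (L', R') (disjoint subsets of V) as γ(L', R') = w(E(L')) + w(E(R')) + w(E(L'∪R', V∖(L'∪R'))). Suppose that for every t > 0 with L_f(t) ∪ R_f(t) ≠ ∅, both γ(L ∪ L_f(t), R ∪ R_f(t)) > γ(L, R) and γ(L ∪ R_f(t), R ∪ L_f(t)) > γ(L, R). Then √(72·R⁺_H(f|_U)) ≥ R⁺_G(f), where R⁺_H is the signless Rayleigh quotient computed in H and R⁺_G the signless Rayleigh quotient computed in G. -/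

import Mathlib

/-!
Let `A` and `B` be the signless energy and the squared norm of `f` in `H`, and let
`C = ∑_v w(v, V ∖ U) f(v)²` (`crossMass`). As `f` vanishes off `U`,
`R⁺_G(f) = (A + C) / (B + C)`.

Adding the two hypotheses at a threshold `s > 0` and writing `S_s = L_f(s) ∪ R_f(s)` gives
`w(V ∖ U, S_s) ≤ w(L_f(s), L_f(s)) + w(R_f(s), R_f(s)) + 2 w(S_s, U ∖ S_s)` (ordered pairs).
Integrating against `d(s²)` turns the left side into `C` and the right side into at most
`∑_{u,v} w_H(u,v) |f(u) + f(v)| (|f(u)| + |f(v)|)`, which Cauchy–Schwarz bounds by `√(2A · 4B)`.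
Together with `A ≤ 2B` this gives `(A + C)² ≤ 72 A B`. The integral is a finite sum
(`layerSum`) over the values of `|f|`, between which no level set changes.
-/

open scoped Classical

namespace CheegerHigher

noncomputable section

variable {n : ℕ}

/-- Weighted degree of a vertex: `w(v) = ∑_u w(v,u)`. -/
def deg (w : Fin n → Fin n → ℝ) (v : Fin n) : ℝ := ∑ u, w v u

/-- Volume of a vertex set. -/
def vol (w : Fin n → Fin n → ℝ) (S : Finset (Fin n)) : ℝ := ∑ v ∈ S, deg w v

/-- Total weight of (ordered) pairs from `S` to `T`; for disjoint `S`, `T` this is `w(E(S,T))`. -/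
def cutWeight (w : Fin n → Fin n → ℝ) (S T : Finset (Fin n)) : ℝ :=
  ∑ u ∈ S, ∑ v ∈ T, w u v

/-- Total edge weight `w(E)` (each unordered edge counted once). -/
def totalWeight (w : Fin n → Fin n → ℝ) : ℝ := (1 / 2 : ℝ) * ∑ u, ∑ v, w u v

/-- Conductance of a set `S`. -/
noncomputable def conductance (w : Fin n → Fin n → ℝ) (S : Finset (Fin n)) : ℝ :=
  cutWeight w S Sᶜ / min (vol w S) (vol w Sᶜ)

/-- Conductance of the graph: minimum over nonempty proper subsets. -/
noncomputable def minConductance (w : Fin n → Fin n → ℝ) : ℝ :=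
  sInf { x | ∃ S : Finset (Fin n), S.Nonempty ∧ S ≠ Finset.univ ∧ x = conductance w S }

/-- `k`-way expansion: min over `k` pairwise disjoint nonempty subsets of the max conductance. -/
noncomputable def multiwayExpansion (w : Fin n → Fin n → ℝ) (k : ℕ) : ℝ :=
  sInf { x | ∃ S : Fin k → Finset (Fin n), (∀ i, (S i).Nonempty) ∧
      (∀ i j, i ≠ j → Disjoint (S i) (S j)) ∧ x = ⨆ i, conductance w (S i) }

/-- `‖f‖_w²  = ∑_v w(v) f(v)²`. -/
def normWsq (w : Fin n → Fin n → ℝ) (f : Fin n → ℝ) : ℝ := ∑ v, deg w v * f v ^ 2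

/-- Dirichlet energy `∑_{{u,v} ∈ E} w(u,v) (f(u)-f(v))²` (each unordered edge once). -/
def energy (w : Fin n → Fin n → ℝ) (f : Fin n → ℝ) : ℝ :=
  (1 / 2 : ℝ) * ∑ u, ∑ v, w u v * (f u - f v) ^ 2

/-- Rayleigh quotient of `f`. -/
noncomputable def rayleigh (w : Fin n → Fin n → ℝ) (f : Fin n → ℝ) : ℝ :=
  energy w f / normWsq w f

/-- Signless energy `∑_{{u,v} ∈ E} w(u,v) (f(u)+f(v))²`. -/
def signEnergy (w : Fin n → Fin n → ℝ) (f : Fin n → ℝ) : ℝ :=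
  (1 / 2 : ℝ) * ∑ u, ∑ v, w u v * (f u + f v) ^ 2

/-- Signless Rayleigh quotient `R⁺(f)`. -/
noncomputable def rayleighP (w : Fin n → Fin n → ℝ) (f : Fin n → ℝ) : ℝ :=
  signEnergy w f / normWsq w f

/-- Normalized Laplacian `𝓛 = I - D^{-1/2} A D^{-1/2}`. -/
noncomputable def normLap (w : Fin n → Fin n → ℝ) : Matrix (Fin n) (Fin n) ℝ :=
  Matrix.of fun u v =>
    (if u = v then (1 : ℝ) else 0) - w u v / (Real.sqrt (deg w u) * Real.sqrt (deg w v))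

/-- Signless normalized Laplacian `𝓜 = I + D^{-1/2} A D^{-1/2}`. -/
noncomputable def signLap (w : Fin n → Fin n → ℝ) : Matrix (Fin n) (Fin n) ℝ :=
  Matrix.of fun u v =>
    (if u = v then (1 : ℝ) else 0) + w u v / (Real.sqrt (deg w u) * Real.sqrt (deg w v))

/-- The `k`-th smallest eigenvalue of a Hermitian matrix (1-based index `k`). -/
noncomputable def sortedEig {A : Matrix (Fin n) (Fin n) ℝ} (hA : A.IsHermitian) (k : ℕ) : ℝ :=
  if h : k - 1 < n then hA.eigenvalues (Tuple.sort hA.eigenvalues ⟨k - 1, h⟩) else 0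

/-- Threshold set `V_f(t) = {v : f(v) ≥ t}`. -/
noncomputable def thresholdSet (f : Fin n → ℝ) (t : ℝ) : Finset (Fin n) :=
  Finset.univ.filter fun v => t ≤ f v

/-- `φ(f)`: best conductance among threshold sets of `f` that are nonempty and proper. -/
noncomputable def phiF (w : Fin n → Fin n → ℝ) (f : Fin n → ℝ) : ℝ :=
  sInf { x | ∃ t : ℝ, (thresholdSet f t).Nonempty ∧ thresholdSet f t ≠ Finset.univ ∧
      x = conductance w (thresholdSet f t) }

/-- Support of a function, as a finset. -/
noncomputable def supp (f : Fin n → ℝ) : Finset (Fin n) :=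
  Finset.univ.filter fun v => f v ≠ 0

/-- `L_f(t) = {v : f(v) ≤ -t}`. -/
noncomputable def Lset (f : Fin n → ℝ) (t : ℝ) : Finset (Fin n) :=
  Finset.univ.filter fun v => f v ≤ -t

/-- `R_f(t) = {v : f(v) ≥ t}`. -/
noncomputable def Rset (f : Fin n → ℝ) (t : ℝ) : Finset (Fin n) :=
  Finset.univ.filter fun v => t ≤ f v

/-- Bipartiteness ratio of an induced cut `(L,R)` (for disjoint `L`, `R`). -/
noncomputable def biRatio (w : Fin n → Fin n → ℝ) (L R : Finset (Fin n)) : ℝ :=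
  (cutWeight w L L + cutWeight w R R + cutWeight w (L ∪ R) (L ∪ R)ᶜ) / vol w (L ∪ R)

/-- `β(f)`: best bipartiteness ratio among threshold cuts of `f`. -/
noncomputable def betaF (w : Fin n → Fin n → ℝ) (f : Fin n → ℝ) : ℝ :=
  sInf { x | ∃ t : ℝ, 0 < t ∧ (Lset f t ∪ Rset f t).Nonempty ∧
      x = biRatio w (Lset f t) (Rset f t) }

/-- `β(G)`: minimum bipartiteness ratio over all induced cuts. -/
noncomputable def minBeta (w : Fin n → Fin n → ℝ) : ℝ :=
  sInf { x | ∃ L R : Finset (Fin n), Disjoint L R ∧ (L ∪ R).Nonempty ∧ x = biRatio w L R }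

/-- Energy of `f` restricted to the interval `(b,a]`:
`∑_{{u,v} ∈ E} w(u,v) · len((b,a] ∩ [f(u),f(v)])²`. -/
def intervalEnergy (w : Fin n → Fin n → ℝ) (f : Fin n → ℝ) (b a : ℝ) : ℝ :=
  (1 / 2 : ℝ) * ∑ u, ∑ v,
    w u v * max 0 (min a (max (f u) (f v)) - max b (min (f u) (f v))) ^ 2

/-- The relative distance `dist(x,R) = inf_{y ∈ R} |x-y|/y` from a point to a region. -/
noncomputable def regionDist (x : ℝ) (R : Set ℝ) : ℝ :=
  sInf ((fun y => |x - y| / y) '' R)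

/-- `g` is a `(2k+1)`-step approximation of `f`: there are thresholds
`0 = t₀ ≤ t₁ ≤ … ≤ t_{2k}` and `g(v)` is a threshold closest to `f(v)`. -/
def IsStepApprox (f g : Fin n → ℝ) (k : ℕ) : Prop :=
  ∃ t : Fin (2 * k + 1) → ℝ, t 0 = 0 ∧ Monotone t ∧
    ∀ v, (∃ i, g v = t i) ∧ ∀ i, |f v - g v| ≤ |f v - t i|

/-- `g` is a symmetric `(2k+1)`-step approximation of `f`: there are thresholds
`0 = t₀ ≤ t₁ ≤ … ≤ t_{2k}` and `g(v)` is a value among `{±t_i}` closest to `f(v)`. -/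
def IsSymStepApprox (f g : Fin n → ℝ) (k : ℕ) : Prop :=
  ∃ t : Fin (2 * k + 1) → ℝ, t 0 = 0 ∧ Monotone t ∧
    ∀ v, (∃ i, g v = t i ∨ g v = -t i) ∧
      ∀ i, |f v - g v| ≤ |f v - t i| ∧ |f v - g v| ≤ |f v + t i|

/-- Edge weights of the induced subgraph on `U`. -/
def inducedW (w : Fin n → Fin n → ℝ) (U : Finset (Fin n)) : Fin n → Fin n → ℝ :=
  fun u v => if u ∈ U ∧ v ∈ U then w u v else 0

/-- Uncutness `γ(L,R) = w(E(L)) + w(E(R)) + w(E(L∪R, complement))`. -/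
noncomputable def uncut (w : Fin n → Fin n → ℝ) (L R : Finset (Fin n)) : ℝ :=
  (1 / 2 : ℝ) * cutWeight w L L + (1 / 2 : ℝ) * cutWeight w R R +
    cutWeight w (L ∪ R) (L ∪ R)ᶜ

section LayerCake

variable (T : Finset ℝ)

def prevElem (s : ℝ) : ℝ :=
  if h : {x ∈ T | x < s}.Nonempty then {x ∈ T | x < s}.max' h else 0

def layerWeight (s : ℝ) : ℝ := s ^ 2 - prevElem T s ^ 2

/-- A discrete version of `∫₀^∞ g(s) d(s²)`, exact for step functions that jump only on `T`. -/
def layerSum (g : ℝ → ℝ) : ℝ := ∑ s ∈ T with 0 < s, layerWeight T s * g s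

variable {T}

theorem prevElem_spec (h0 : 0 ∈ T) {s : ℝ} (hs : 0 < s) :
    prevElem T s ∈ T ∧ prevElem T s < s ∧ ∀ x ∈ T, x < s → x ≤ prevElem T s := by
  have hne : {x ∈ T | x < s}.Nonempty := ⟨0, by simp [h0, hs]⟩
  obtain ⟨hmem, hlt⟩ := Finset.mem_filter.1 (Finset.max'_mem _ hne)
  rw [prevElem, dif_pos hne]
  exact ⟨hmem, hlt, fun x hx hxs => Finset.le_max' _ x (by simp [hx, hxs])⟩

theorem layerWeight_nonneg (h0 : 0 ∈ T) {s : ℝ} (hs : 0 < s) : 0 ≤ layerWeight T s := by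
  obtain ⟨-, hlt, hmax⟩ := prevElem_spec h0 hs
  have := hmax 0 h0 hs
  unfold layerWeight
  nlinarith

theorem sum_layerWeight_of_mem (h0 : 0 ∈ T) {c : ℝ} (hc : c ∈ T) (hc0 : 0 ≤ c) :
    ∑ s ∈ T with 0 < s ∧ s ≤ c, layerWeight T s = c ^ 2 := by
  refine T.isWF.induction
    (P := fun c => 0 ≤ c → ∑ s ∈ T with 0 < s ∧ s ≤ c, layerWeight T s = c ^ 2)
    hc (fun c hc ih hc0 => ?_) hc0
  rcases hc0.eq_or_lt with rfl | hpos
  · rw [Finset.filter_false_of_mem fun s _ hs => by linarith [hs.1, hs.2]]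
    simp
  obtain ⟨hpT, hpc, hmax⟩ := prevElem_spec h0 hpos
  have hp0 : 0 ≤ prevElem T c := hmax 0 h0 hpos
  have hsplit : {s ∈ T | 0 < s ∧ s ≤ c} = insert c {s ∈ T | 0 < s ∧ s ≤ prevElem T c} := by
    ext x
    simp only [Finset.mem_filter, Finset.mem_insert]
    constructor
    · rintro ⟨hx, hx0, hxc⟩
      rcases hxc.eq_or_lt with rfl | hxc
      · exact Or.inl rfl
      · exact Or.inr ⟨hx, hx0, hmax x hx hxc⟩
    · rintro (rfl | ⟨hx, hx0, hxp⟩)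
      · exact ⟨hc, hpos, le_rfl⟩
      · exact ⟨hx, hx0, hxp.trans hpc.le⟩
  rw [hsplit, Finset.sum_insert (by simp [hpc.not_ge]), ih _ hpT hpc hp0, layerWeight]
  ring

theorem layerSum_indicator (h0 : 0 ∈ T) {c : ℝ} (hc : 0 ≤ c → c ∈ T) :
    layerSum T (fun s => if s ≤ c then 1 else 0) = max c 0 ^ 2 := by
  simp only [layerSum, mul_ite, mul_one, mul_zero]
  rw [← Finset.sum_filter, Finset.filter_filter]
  rcases le_or_gt 0 c with hc0 | hc0
  · rw [max_eq_left hc0, sum_layerWeight_of_mem h0 (hc hc0) hc0]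
  · rw [max_eq_right hc0.le, Finset.filter_false_of_mem fun s _ hs => by linarith [hs.1, hs.2]]
    simp

theorem layerSum_add (g h : ℝ → ℝ) :
    layerSum T (fun s => g s + h s) = layerSum T g + layerSum T h := by
  simp only [layerSum, mul_add, Finset.sum_add_distrib]

theorem layerSum_sub (g h : ℝ → ℝ) :
    layerSum T (fun s => g s - h s) = layerSum T g - layerSum T h := by
  simp only [layerSum, mul_sub, Finset.sum_sub_distrib]

theorem layerSum_const_mul (c : ℝ) (g : ℝ → ℝ) :
    layerSum T (fun s => c * g s) = c * layerSum T g := by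
  simp only [layerSum, Finset.mul_sum]
  exact Finset.sum_congr rfl fun s _ => by ring

theorem layerSum_sum {ι : Type*} (I : Finset ι) (g : ι → ℝ → ℝ) :
    layerSum T (fun s => ∑ i ∈ I, g i s) = ∑ i ∈ I, layerSum T (g i) := by
  simp only [layerSum, Finset.mul_sum]
  exact Finset.sum_comm

theorem layerSum_mono (h0 : 0 ∈ T) {g h : ℝ → ℝ} (hgh : ∀ s, 0 < s → g s ≤ h s) :
    layerSum T g ≤ layerSum T h :=
  Finset.sum_le_sum fun s hs =>
    have hs : 0 < s := (Finset.mem_filter.1 hs).2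
    mul_le_mul_of_nonneg_left (hgh s hs) (layerWeight_nonneg h0 hs)

end LayerCake

section SymmetricSums

variable {ι : Type*} [Fintype ι] {W : ι → ι → ℝ}

theorem sum_sum_mul_swap (hsym : ∀ u v, W u v = W v u) (g : ι → ι → ℝ) :
    ∑ u, ∑ v, W u v * g v u = ∑ u, ∑ v, W u v * g u v := by
  rw [Finset.sum_comm]
  simp only [hsym]

theorem sum_sum_mul_le_of_add_swap_le (hsym : ∀ u v, W u v = W v u) (hnn : ∀ u v, 0 ≤ W u v)
    {g h : ι → ι → ℝ} (hgh : ∀ u v, g u v + g v u ≤ h u v + h v u) :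
    ∑ u, ∑ v, W u v * g u v ≤ ∑ u, ∑ v, W u v * h u v := by
  have hle : ∑ u, ∑ v, W u v * (g u v + g v u) ≤ ∑ u, ∑ v, W u v * (h u v + h v u) :=
    Finset.sum_le_sum fun u _ => Finset.sum_le_sum fun v _ =>
      mul_le_mul_of_nonneg_left (hgh u v) (hnn u v)
  simp only [mul_add, Finset.sum_add_distrib] at hle
  rw [sum_sum_mul_swap hsym g, sum_sum_mul_swap hsym h] at hle
  linarith

end SymmetricSums

section Cuts

variable {w : Fin n → Fin n → ℝ}

theorem cutWeight_comm (hsym : ∀ u v, w u v = w v u) (A B : Finset (Fin n)) :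
    cutWeight w A B = cutWeight w B A := by
  rw [cutWeight, cutWeight, Finset.sum_comm]
  simp only [hsym]

theorem cutWeight_union_left {A B : Finset (Fin n)} (h : Disjoint A B) (C : Finset (Fin n)) :
    cutWeight w (A ∪ B) C = cutWeight w A C + cutWeight w B C :=
  Finset.sum_union h

theorem cutWeight_union_right {A B : Finset (Fin n)} (h : Disjoint A B) (C : Finset (Fin n)) :
    cutWeight w C (A ∪ B) = cutWeight w C A + cutWeight w C B := by
  simp only [cutWeight, Finset.sum_union h, Finset.sum_add_distrib]

theorem cutWeight_eq_sum_sum_ite (A B : Finset (Fin n)) :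
    cutWeight w A B = ∑ u, ∑ v, w u v * if u ∈ A ∧ v ∈ B then 1 else 0 := by
  simp only [cutWeight, mul_ite, mul_one, mul_zero, ite_and]
  simp [Finset.sum_ite_mem]

theorem inducedW_symm (hsym : ∀ u v, w u v = w v u) (U : Finset (Fin n)) (u v : Fin n) :
    inducedW w U u v = inducedW w U v u := by
  simp only [inducedW, hsym u v, and_comm]

theorem inducedW_nonneg (hnn : ∀ u v, 0 ≤ w u v) (U : Finset (Fin n)) (u v : Fin n) :
    0 ≤ inducedW w U u v := by
  unfold inducedW
  split_ifs
  exacts [hnn u v, le_rfl]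

theorem cutWeight_inducedW (U A B : Finset (Fin n)) :
    cutWeight (inducedW w U) A B = cutWeight w (A ∩ U) (B ∩ U) := by
  simp only [cutWeight, inducedW, ite_and]
  simp [Finset.sum_ite_mem]

theorem uncut_union_union (hsym : ∀ u v, w u v = w v u) {L R U A B : Finset (Fin n)}
    (hU : L ∪ R = Uᶜ) (hA : A ⊆ U) (hB : B ⊆ U) :
    uncut w (L ∪ A) (R ∪ B) = uncut w L R + cutWeight w L A + (1 / 2) * cutWeight w A A
      + cutWeight w R B + (1 / 2) * cutWeight w B B
      + cutWeight w (A ∪ B) (U \ (A ∪ B)) - cutWeight w Uᶜ (A ∪ B) := by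
  have hdisj : ∀ X ⊆ Uᶜ, ∀ Y ⊆ U, Disjoint X Y := fun X hX Y hY =>
    Finset.disjoint_of_subset_left hX (Finset.disjoint_of_subset_right hY disjoint_compl_left)
  have hLA : Disjoint L A := hdisj L (hU ▸ Finset.subset_union_left) A hA
  have hRB : Disjoint R B := hdisj R (hU ▸ Finset.subset_union_right) B hB
  have hS : A ∪ B ⊆ U := Finset.union_subset hA hB
  have hunion : L ∪ A ∪ (R ∪ B) = Uᶜ ∪ (A ∪ B) := by
    rw [← hU]; ac_rfl
  have hcompl : (Uᶜ ∪ (A ∪ B))ᶜ = U \ (A ∪ B) := by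
    rw [Finset.compl_union, compl_compl, Finset.sdiff_eq_inter_compl]
  have hsplitU : cutWeight w Uᶜ U = cutWeight w Uᶜ (A ∪ B) + cutWeight w Uᶜ (U \ (A ∪ B)) := by
    rw [← cutWeight_union_right Finset.disjoint_sdiff, Finset.union_sdiff_of_subset hS]
  simp only [uncut, hunion, hcompl, hU, compl_compl, hsplitU,
    cutWeight_union_left hLA, cutWeight_union_right hLA, cutWeight_union_left hRB,
    cutWeight_union_right hRB, cutWeight_union_left (hdisj Uᶜ le_rfl _ hS),
    cutWeight_comm hsym A L, cutWeight_comm hsym B R]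
  ring

theorem cutWeight_compl_lt_of_uncut_lt (hsym : ∀ u v, w u v = w v u)
    {L R U A B : Finset (Fin n)} (hLR : Disjoint L R) (hU : L ∪ R = Uᶜ)
    (hA : A ⊆ U) (hB : B ⊆ U) (hAB : Disjoint A B)
    (h₁ : uncut w L R < uncut w (L ∪ A) (R ∪ B)) (h₂ : uncut w L R < uncut w (L ∪ B) (R ∪ A)) :
    cutWeight w Uᶜ (A ∪ B) <
      cutWeight w A A + cutWeight w B B + 2 * cutWeight w (A ∪ B) (U \ (A ∪ B)) := by
  rw [uncut_union_union hsym hU hA hB] at h₁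
  rw [uncut_union_union hsym hU hB hA, Finset.union_comm B A] at h₂
  have hsplit : ∀ X, cutWeight w Uᶜ X = cutWeight w L X + cutWeight w R X := fun X => by
    rw [← hU, cutWeight_union_left hLR]
  linarith [hsplit A, hsplit B, cutWeight_union_right (w := w) hAB Uᶜ]

end Cuts

section Thresholds

def levels (f : Fin n → ℝ) : Finset ℝ :=
  insert 0 (Finset.univ.image f ∪ Finset.univ.image (-f))

/-- For `s > 0`, `a = f u` and `b = f v`, the contribution of the ordered pair `(u, v)` to
`w(L_s, L_s) + w(R_s, R_s) + 2 w(S_s, S_sᶜ)`, where `S_s = L_s ∪ R_s`. -/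
def layerProfile (s a b : ℝ) : ℝ :=
  ((if s ≤ min (-a) (-b) then 1 else 0) + (if s ≤ min a b then 1 else 0))
    + 2 * ((if s ≤ |a| then 1 else 0) - if s ≤ min |a| |b| then 1 else 0)

def layerValue (a b : ℝ) : ℝ :=
  max (min (-a) (-b)) 0 ^ 2 + max (min a b) 0 ^ 2 + 2 * (a ^ 2 - min |a| |b| ^ 2)

theorem layerProfile_eq_ite (s a b : ℝ) (hs : 0 < s) :
    layerProfile s a b = (if a ≤ -s ∧ b ≤ -s then 1 else 0) + (if s ≤ a ∧ s ≤ b then 1 else 0)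
      + 2 * if (a ≤ -s ∨ s ≤ a) ∧ ¬(b ≤ -s ∨ s ≤ b) then 1 else 0 := by
  have region : ∀ x : ℝ, (x ≤ -s ∧ ¬s ≤ x) ∨ (¬x ≤ -s ∧ ¬s ≤ x) ∨ (¬x ≤ -s ∧ s ≤ x) := by
    intro x
    by_cases h₁ : x ≤ -s <;> by_cases h₂ : s ≤ x
    · linarith
    all_goals tauto
  simp only [layerProfile, le_min_iff, le_abs', le_neg (a := s)]
  rcases region a with ⟨ha, ha'⟩ | ⟨ha, ha'⟩ | ⟨ha, ha'⟩ <;>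
    rcases region b with ⟨hb, hb'⟩ | ⟨hb, hb'⟩ | ⟨hb, hb'⟩ <;>
    simp [ha, ha', hb, hb']

variable {f : Fin n → ℝ}

theorem mem_Lset {t : ℝ} {v : Fin n} : v ∈ Lset f t ↔ f v ≤ -t := by simp [Lset]

theorem mem_Rset {t : ℝ} {v : Fin n} : v ∈ Rset f t ↔ t ≤ f v := by simp [Rset]

theorem Lset_union_Rset (t : ℝ) : Lset f t ∪ Rset f t = ({v | t ≤ |f v|} : Finset (Fin n)) := by
  ext v
  simp [mem_Lset, mem_Rset, le_abs', or_comm]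

theorem zero_mem_levels : (0 : ℝ) ∈ levels f := Finset.mem_insert_self _ _

theorem mem_levels (v : Fin n) : f v ∈ levels f ∧ -f v ∈ levels f ∧ |f v| ∈ levels f := by
  have h₁ : f v ∈ levels f := by simp [levels]
  have h₂ : -f v ∈ levels f := by simp [levels]
  refine ⟨h₁, h₂, ?_⟩
  rcases abs_choice (f v) with h | h <;> rw [h] <;> assumption

theorem layerSum_levels_layerProfile (u v : Fin n) :
    layerSum (levels f) (fun s => layerProfile s (f u) (f v)) = layerValue (f u) (f v) := by
  obtain ⟨hu, hu', hu''⟩ := mem_levels (f := f) u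
  obtain ⟨hv, hv', hv''⟩ := mem_levels (f := f) v
  have h0 := zero_mem_levels (f := f)
  simp only [layerProfile, layerSum_add, layerSum_sub, layerSum_const_mul]
  rw [layerSum_indicator h0 fun _ => min_rec' _ hu' hv',
    layerSum_indicator h0 fun _ => min_rec' _ hu hv, layerSum_indicator h0 fun _ => hu'',
    layerSum_indicator h0 fun _ => min_rec' _ hu'' hv'', max_eq_left (abs_nonneg (f u)),
    max_eq_left (le_min (abs_nonneg (f u)) (abs_nonneg (f v))), sq_abs, layerValue]

end Thresholds

theorem layerValue_add_swap_le (a b : ℝ) :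
    layerValue a b + layerValue b a ≤ 2 * (|a + b| * (|a| + |b|)) := by
  simp only [layerValue, min_comm b a, min_comm (-b) (-a), min_comm |b| |a|]
  rcases le_total 0 a with ha | ha <;> rcases le_total 0 b with hb | hb <;>
    simp only [abs_of_nonneg, abs_of_nonpos, ha, hb, min_def, max_def] <;>
    split_ifs <;> nlinarith [abs_nonneg (a + b), le_abs_self (a + b), neg_abs_le (a + b)]

theorem sum_sum_mul_layerValue_le {ι : Type*} [Fintype ι] {W : ι → ι → ℝ}
    (hsym : ∀ u v, W u v = W v u) (hnn : ∀ u v, 0 ≤ W u v) (f : ι → ℝ) :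
    ∑ u, ∑ v, W u v * layerValue (f u) (f v)
      ≤ ∑ u, ∑ v, W u v * (|f u + f v| * (|f u| + |f v|)) :=
  sum_sum_mul_le_of_add_swap_le hsym hnn fun u v => by
    rw [add_comm (f v), add_comm |f v|]
    linarith [layerValue_add_swap_le (f u) (f v)]

section Supported

def crossMass (w : Fin n → Fin n → ℝ) (U : Finset (Fin n)) (f : Fin n → ℝ) : ℝ :=
  ∑ u ∈ Uᶜ, ∑ v, w u v * f v ^ 2

variable {w : Fin n → Fin n → ℝ} {U : Finset (Fin n)} {f : Fin n → ℝ}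

theorem Lset_subset (hfU : ∀ v, v ∉ U → f v = 0) {t : ℝ} (ht : 0 < t) : Lset f t ⊆ U :=
  fun v hv => by_contra fun h => by linarith [mem_Lset.1 hv, hfU v h]

theorem Rset_subset (hfU : ∀ v, v ∉ U → f v = 0) {t : ℝ} (ht : 0 < t) : Rset f t ⊆ U :=
  fun v hv => by_contra fun h => by linarith [mem_Rset.1 hv, hfU v h]

theorem cutWeight_levelSets_eq_sum_sum_layerProfile (hfU : ∀ v, v ∉ U → f v = 0) {s : ℝ}
    (hs : 0 < s) :
    cutWeight w (Lset f s) (Lset f s) + cutWeight w (Rset f s) (Rset f s)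
        + 2 * cutWeight w (Lset f s ∪ Rset f s) (U \ (Lset f s ∪ Rset f s))
      = ∑ u, ∑ v, inducedW w U u v * layerProfile s (f u) (f v) := by
  have hL := Finset.inter_eq_left.2 (Lset_subset hfU hs)
  have hR := Finset.inter_eq_left.2 (Rset_subset hfU hs)
  have hS := Finset.inter_eq_left.2 (Finset.union_subset (Lset_subset hfU hs) (Rset_subset hfU hs))
  have eL : cutWeight w (Lset f s) (Lset f s) = cutWeight (inducedW w U) (Lset f s) (Lset f s) := by
    rw [cutWeight_inducedW, hL]
  have eR : cutWeight w (Rset f s) (Rset f s) = cutWeight (inducedW w U) (Rset f s) (Rset f s) := by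
    rw [cutWeight_inducedW, hR]
  have eS : cutWeight w (Lset f s ∪ Rset f s) (U \ (Lset f s ∪ Rset f s))
      = cutWeight (inducedW w U) (Lset f s ∪ Rset f s) (Lset f s ∪ Rset f s)ᶜ := by
    rw [cutWeight_inducedW, hS, Finset.sdiff_eq_inter_compl, Finset.inter_comm]
  rw [eL, eR, eS]
  simp only [cutWeight_eq_sum_sum_ite, Finset.mul_sum, ← Finset.sum_add_distrib]
  refine Finset.sum_congr rfl fun u _ => Finset.sum_congr rfl fun v _ => ?_
  rw [layerProfile_eq_ite _ _ _ hs]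
  simp only [mem_Lset, mem_Rset, Finset.mem_union, Finset.mem_compl]
  ring

theorem cutWeight_compl_levelSet (s : ℝ) :
    cutWeight w Uᶜ (Lset f s ∪ Rset f s) = ∑ u ∈ Uᶜ, ∑ v, w u v * if s ≤ |f v| then 1 else 0 := by
  simp only [cutWeight, Lset_union_Rset, Finset.sum_filter, mul_ite, mul_one, mul_zero]

theorem layerSum_cutWeight_compl_levelSet :
    layerSum (levels f) (fun s => cutWeight w Uᶜ (Lset f s ∪ Rset f s)) = crossMass w U f := by
  simp only [cutWeight_compl_levelSet, layerSum_sum, layerSum_const_mul]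
  refine Finset.sum_congr rfl fun u _ => Finset.sum_congr rfl fun v _ => ?_
  rw [layerSum_indicator zero_mem_levels fun _ => (mem_levels v).2.2,
    max_eq_left (abs_nonneg _), sq_abs]

theorem crossMass_le_sum_sum_layerValue (hsym : ∀ u v, w u v = w v u)
    (hfU : ∀ v, v ∉ U → f v = 0) {L R : Finset (Fin n)} (hLR : Disjoint L R) (hU : L ∪ R = Uᶜ)
    (hcut : ∀ t : ℝ, 0 < t → (Lset f t ∪ Rset f t).Nonempty →
      uncut w L R < uncut w (L ∪ Lset f t) (R ∪ Rset f t) ∧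
      uncut w L R < uncut w (L ∪ Rset f t) (R ∪ Lset f t)) :
    crossMass w U f ≤ ∑ u, ∑ v, inducedW w U u v * layerValue (f u) (f v) := by
  have hpt : ∀ s, 0 < s → cutWeight w Uᶜ (Lset f s ∪ Rset f s)
      ≤ ∑ u, ∑ v, inducedW w U u v * layerProfile s (f u) (f v) := by
    intro s hs
    rw [← cutWeight_levelSets_eq_sum_sum_layerProfile hfU hs]
    rcases (Lset f s ∪ Rset f s).eq_empty_or_nonempty with hS | hS
    · obtain ⟨hL, hR⟩ := Finset.union_eq_empty.1 hS
      simp [hL, hR, cutWeight]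
    · obtain ⟨h₁, h₂⟩ := hcut s hs hS
      have hdisj : Disjoint (Lset f s) (Rset f s) := Finset.disjoint_left.2 fun v hL hR => by
        linarith [mem_Lset.1 hL, mem_Rset.1 hR]
      exact (cutWeight_compl_lt_of_uncut_lt hsym hLR hU (Lset_subset hfU hs) (Rset_subset hfU hs)
        hdisj h₁ h₂).le
  calc crossMass w U f
      = layerSum (levels f) (fun s => cutWeight w Uᶜ (Lset f s ∪ Rset f s)) :=
        layerSum_cutWeight_compl_levelSet.symm
    _ ≤ layerSum (levels f)
          (fun s => ∑ u, ∑ v, inducedW w U u v * layerProfile s (f u) (f v)) :=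
        layerSum_mono zero_mem_levels hpt
    _ = ∑ u, ∑ v, inducedW w U u v * layerValue (f u) (f v) := by
        simp only [layerSum_sum, layerSum_const_mul, layerSum_levels_layerProfile]

end Supported

section Energies

variable {w : Fin n → Fin n → ℝ}

theorem normWsq_eq_sum_sum (f : Fin n → ℝ) :
    normWsq w f = ∑ u, ∑ v, w u v * f u ^ 2 := by
  simp only [normWsq, deg, Finset.sum_mul]

theorem sum_sum_mul_le_four_normWsq (hsym : ∀ u v, w u v = w v u) (hnn : ∀ u v, 0 ≤ w u v)
    (f : Fin n → ℝ) {g : ℝ → ℝ → ℝ} (hg : ∀ a b, g a b + g b a ≤ 4 * a ^ 2 + 4 * b ^ 2) :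
    ∑ u, ∑ v, w u v * g (f u) (f v) ≤ 4 * normWsq w f := by
  rw [normWsq_eq_sum_sum, Finset.mul_sum]
  simp only [Finset.mul_sum, mul_left_comm (4 : ℝ)]
  exact sum_sum_mul_le_of_add_swap_le hsym hnn fun u v => hg (f u) (f v)

theorem signEnergy_nonneg (hnn : ∀ u v, 0 ≤ w u v) (f : Fin n → ℝ) : 0 ≤ signEnergy w f :=
  mul_nonneg (by norm_num) <| Finset.sum_nonneg fun u _ => Finset.sum_nonneg fun v _ =>
    mul_nonneg (hnn u v) (sq_nonneg _)

theorem signEnergy_le_two_normWsq (hsym : ∀ u v, w u v = w v u) (hnn : ∀ u v, 0 ≤ w u v)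
    (f : Fin n → ℝ) : signEnergy w f ≤ 2 * normWsq w f := by
  have := sum_sum_mul_le_four_normWsq hsym hnn f (g := fun a b => (a + b) ^ 2) fun a b => by
    nlinarith [sq_nonneg (a - b)]
  rw [signEnergy]
  linarith

theorem sq_sum_sum_le (hsym : ∀ u v, w u v = w v u) (hnn : ∀ u v, 0 ≤ w u v) (f : Fin n → ℝ) :
    (∑ u, ∑ v, w u v * (|f u + f v| * (|f u| + |f v|))) ^ 2
      ≤ 8 * signEnergy w f * normWsq w f := by
  have hCS := Finset.sum_sq_le_sum_mul_sum_of_sq_le_mul (Finset.univ : Finset (Fin n × Fin n))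
    (r := fun p => w p.1 p.2 * (|f p.1 + f p.2| * (|f p.1| + |f p.2|)))
    (f := fun p => w p.1 p.2 * (f p.1 + f p.2) ^ 2)
    (g := fun p => w p.1 p.2 * (|f p.1| + |f p.2|) ^ 2)
    (fun p _ => mul_nonneg (hnn _ _) (sq_nonneg _)) (fun p _ => mul_nonneg (hnn _ _) (sq_nonneg _))
    (fun p _ => le_of_eq (by rw [← sq_abs (f p.1 + f p.2)]; ring))
  simp only [Fintype.sum_prod_type] at hCS
  have hG := sum_sum_mul_le_four_normWsq hsym hnn f (g := fun a b => (|a| + |b|) ^ 2)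
    fun a b => by nlinarith [sq_abs a, sq_abs b, sq_nonneg (|a| - |b|)]
  have hF : ∑ u, ∑ v, w u v * (f u + f v) ^ 2 = 2 * signEnergy w f := by
    rw [signEnergy]; ring
  rw [hF] at hCS
  nlinarith [signEnergy_nonneg hnn f]

theorem crossMass_nonneg (hnn : ∀ u v, 0 ≤ w u v) (U : Finset (Fin n)) (f : Fin n → ℝ) :
    0 ≤ crossMass w U f :=
  Finset.sum_nonneg fun u _ => Finset.sum_nonneg fun v _ => mul_nonneg (hnn u v) (sq_nonneg _)

end Energies

section Restriction

variable {w : Fin n → Fin n → ℝ} {U : Finset (Fin n)} {f : Fin n → ℝ}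

theorem sub_inducedW_mul_mul_eq_zero (hfU : ∀ v, v ∉ U → f v = 0) (u v : Fin n) :
    (w u v - inducedW w U u v) * (f u * f v) = 0 := by
  by_cases hu : u ∈ U <;> by_cases hv : v ∈ U <;> simp [inducedW, hu, hv, hfU]

theorem sum_sum_sub_inducedW_mul_sq (hfU : ∀ v, v ∉ U → f v = 0) :
    ∑ u, ∑ v, (w u v - inducedW w U u v) * f v ^ 2 = crossMass w U f := by
  have hpt : ∀ u v,
      (w u v - inducedW w U u v) * f v ^ 2 = if u ∈ Uᶜ then w u v * f v ^ 2 else 0 := by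
    intro u v
    by_cases hu : u ∈ U <;> by_cases hv : v ∈ U <;> simp [inducedW, hu, hv, hfU]
  simp only [hpt, Finset.sum_ite_irrel, Finset.sum_const_zero]
  rw [Finset.sum_ite_mem, Finset.univ_inter, crossMass]

theorem normWsq_eq_add_crossMass (hsym : ∀ u v, w u v = w v u) (hfU : ∀ v, v ∉ U → f v = 0) :
    normWsq w f = normWsq (inducedW w U) f + crossMass w U f := by
  rw [← sum_sum_sub_inducedW_mul_sq hfU, normWsq_eq_sum_sum, normWsq_eq_sum_sum,
    ← sum_sum_mul_swap hsym, ← sum_sum_mul_swap (inducedW_symm hsym U)]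
  simp only [sub_mul, Finset.sum_sub_distrib]
  ring

theorem signEnergy_eq_add_crossMass (hsym : ∀ u v, w u v = w v u)
    (hfU : ∀ v, v ∉ U → f v = 0) :
    signEnergy w f = signEnergy (inducedW w U) f + crossMass w U f := by
  have hpt : ∀ u v, w u v * (f u + f v) ^ 2 = inducedW w U u v * (f u + f v) ^ 2
      + ((w u v - inducedW w U u v) * f u ^ 2 + (w u v - inducedW w U u v) * f v ^ 2) := by
    intro u v
    linear_combination 2 * sub_inducedW_mul_mul_eq_zero (w := w) hfU u v
  have hswap := sum_sum_mul_swap (W := fun u v => w u v - inducedW w U u v)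
    (fun u v => by rw [hsym u v, inducedW_symm hsym U u v]) fun u _ => f u ^ 2
  simp only [signEnergy, hpt, Finset.sum_add_distrib, ← hswap, sum_sum_sub_inducedW_mul_sq hfU]
  ring

end Restriction

theorem add_div_add_le_sqrt {A B C D : ℝ} (hA : 0 ≤ A) (hB : 0 < B) (hC : 0 ≤ C)
    (hAB : A ≤ 2 * B) (hCD : C ≤ D) (hD : D ^ 2 ≤ 8 * A * B) :
    (A + C) / (B + C) ≤ √(72 * (A / B)) := by
  have hsq : (A + C) ^ 2 ≤ 72 * A * B := by
    nlinarith [sq_nonneg (A - C), mul_le_mul_of_nonneg_left hAB hA]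
  calc (A + C) / (B + C) ≤ (A + C) / B := div_le_div_of_nonneg_left (by linarith) hB (by linarith)
    _ = √((A + C) ^ 2 / B ^ 2) := by
        rw [Real.sqrt_div' _ (sq_nonneg B), Real.sqrt_sq (by linarith), Real.sqrt_sq hB.le]
    _ ≤ √(72 * (A / B)) := by
        gcongr
        rw [div_le_iff₀ (by positivity)]
        calc (A + C) ^ 2 ≤ 72 * A * B := hsq
          _ = 72 * (A / B) * B ^ 2 := by field_simp

theorem maxcut_enlargement_general
    (w : Fin n → Fin n → ℝ)
    (hsym : ∀ u v, w u v = w v u) (hnn : ∀ u v, 0 ≤ w u v)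
    (U : Finset (Fin n)) (f : Fin n → ℝ)
    (hfU : ∀ v, v ∉ U → f v = 0)
    (hpos : 0 < normWsq (inducedW w U) f)
    (L R : Finset (Fin n)) (hLR : Disjoint L R) (hUnion : L ∪ R = Uᶜ)
    (hcut : ∀ t : ℝ, 0 < t → (Lset f t ∪ Rset f t).Nonempty →
      uncut w L R < uncut w (L ∪ Lset f t) (R ∪ Rset f t) ∧
      uncut w L R < uncut w (L ∪ Rset f t) (R ∪ Lset f t)) :
    rayleighP w f ≤ Real.sqrt (72 * rayleighP (inducedW w U) f) := by
  have hHsym := inducedW_symm hsym U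
  have hHnn := inducedW_nonneg hnn U
  have hcross := (crossMass_le_sum_sum_layerValue hsym hfU hLR hUnion hcut).trans
    (sum_sum_mul_layerValue_le hHsym hHnn f)
  rw [rayleighP, rayleighP, signEnergy_eq_add_crossMass hsym hfU,
    normWsq_eq_add_crossMass hsym hfU]
  exact add_div_add_le_sqrt (signEnergy_nonneg hHnn f) hpos (crossMass_nonneg hnn U f)
    (signEnergy_le_two_normWsq hHsym hHnn f) hcross (sq_sum_sum_le hHsym hHnn f)

/-- If every nonempty threshold cut of `f` strictly increases
the uncutness when merged with `(L,R)` (in either orientation), then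
`√(72·R⁺_H(f)) ≥ R⁺_G(f)` for the induced subgraph `H` on `U`. -/
theorem maxcut_enlargement
    (hn : 2 ≤ n) (w : Fin n → Fin n → ℝ)
    (hsym : ∀ u v, w u v = w v u) (hnn : ∀ u v, 0 ≤ w u v)
    (hloop : ∀ v, w v v = 0) (hdeg : ∀ v, 1 ≤ deg w v)
    (U : Finset (Fin n)) (f : Fin n → ℝ) (hf0 : f ≠ 0)
    (hfU : ∀ v, v ∉ U → f v = 0)
    (hpos : 0 < normWsq (inducedW w U) f)
    (L R : Finset (Fin n)) (hLR : Disjoint L R) (hUnion : L ∪ R = Uᶜ)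
    (hcut : ∀ t : ℝ, 0 < t → (Lset f t ∪ Rset f t).Nonempty →
      uncut w L R < uncut w (L ∪ Lset f t) (R ∪ Rset f t) ∧
      uncut w L R < uncut w (L ∪ Rset f t) (R ∪ Lset f t)) :
    rayleighP w f ≤ Real.sqrt (72 * rayleighP (inducedW w U) f) :=
  maxcut_enlargement_general w hsym hnn U f hfU hpos L R hLR hUnion hcut

end

end CheegerHigher
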